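/- Let k > 2 with k−1 ≤ n, and let g₁,…,g_k be pseudomonomials g_j = ∏_{i∈σ_j}xᵢ·∏_{i∈τ_j}(1−xᵢ) with σ_j, τ_j ⊆ {k,…,n} (so none involves the indices 1,…,k−1), such that no two distinct g_j share an index. For 1 ≤ a ≤ b ≤ k write [g_a⋯g_b] for the pseudomonomial ∏_{i∈σ_a∪⋯∪σ_b} xᵢ · ∏_{i∈τ_a∪⋯∪τ_b} (1−xᵢ). Let J be the ideal of R generated by x₁g₁, by x_j(1−x_{j−1})g_j for 2 ≤ j ≤ k−1, and by (1−x_{k−1})g_k. Assume that [g_t⋯g_k] ≠ [g_t⋯g_{t′}] for all 1 ≤ t ≤ t′ < k, and that [g₁⋯g_s] ≠ [g_{s′}⋯g_s] for all 1 < s′ ≤ s ≤ k. Then CF(J) = {x_j·[g₁⋯g_j] : 1 ≤ j ≤ k−1} ∪ {[g₁⋯g_k]} ∪ {x_j·(1−x_i)·[g_{i+1}⋯g_j] : 1 ≤ i < j ≤ k−1} ∪ {(1−x_i)·[g_{i+1}⋯g_k] : 1 ≤ i ≤ k−1}. In particular J is not in canonical form as presented. -/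

import Mathlib

open MvPolynomial

/-- The pseudomonomial `∏_{i∈σ} xᵢ · ∏_{i∈τ} (1 - xᵢ)` in `F₂[x₁,…,xₙ]`. -/
noncomputable def psm (n : ℕ) (σ τ : Finset (Fin n)) : MvPolynomial (Fin n) (ZMod 2) :=
  (∏ i ∈ σ, X i) * ∏ i ∈ τ, (1 - X i)

/-- A polynomial of `F₂[x₁,…,xₙ]` is a pseudomonomial if it has the form
`∏_{i∈σ} xᵢ · ∏_{i∈τ} (1 - xᵢ)` for disjoint `σ τ`. -/
def IsPseudomonomial {n : ℕ} (f : MvPolynomial (Fin n) (ZMod 2)) : Prop :=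
  ∃ σ τ : Finset (Fin n), Disjoint σ τ ∧ f = psm n σ τ

/-- The canonical form of an ideal `J`: the set of minimal pseudomonomials of `J`,
i.e. pseudomonomials `f ∈ J` such that no pseudomonomial `g ≠ f` dividing `f` lies in `J`. -/
def CF {n : ℕ} (J : Ideal (MvPolynomial (Fin n) (ZMod 2))) :
    Set (MvPolynomial (Fin n) (ZMod 2)) :=
  {f | IsPseudomonomial f ∧ f ∈ J ∧
    ∀ g : MvPolynomial (Fin n) (ZMod 2), IsPseudomonomial g → g ∣ f → g ≠ f → g ∉ J}
lemma psm_mul {n : ℕ} {σ₁ τ₁ σ₂ τ₂ : Finset (Fin n)} (hσ : Disjoint σ₁ σ₂)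
    (hτ : Disjoint τ₁ τ₂) :
    psm n σ₁ τ₁ * psm n σ₂ τ₂ = psm n (σ₁ ∪ σ₂) (τ₁ ∪ τ₂) := by
  unfold psm
  rw [Finset.prod_union hσ, Finset.prod_union hτ]; ring

lemma psm_comp {n : ℕ} {σ₁ τ₁ σ₂ τ₂ : Finset (Fin n)} (hσ : σ₁ ⊆ σ₂) (hτ : τ₁ ⊆ τ₂) :
    psm n σ₁ τ₁ * psm n (σ₂ \ σ₁) (τ₂ \ τ₁) = psm n σ₂ τ₂ := by
  rw [psm_mul Finset.disjoint_sdiff Finset.disjoint_sdiff,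
    Finset.union_sdiff_of_subset hσ, Finset.union_sdiff_of_subset hτ]

lemma psm_dvd {n : ℕ} {σ₁ τ₁ σ₂ τ₂ : Finset (Fin n)} (hσ : σ₁ ⊆ σ₂) (hτ : τ₁ ⊆ τ₂) :
    psm n σ₁ τ₁ ∣ psm n σ₂ τ₂ :=
  ⟨psm n (σ₂ \ σ₁) (τ₂ \ τ₁), (psm_comp hσ hτ).symm⟩

lemma eval_psm {n : ℕ} (p : Fin n → ZMod 2) (σ τ : Finset (Fin n)) :
    eval p (psm n σ τ) = (∏ i ∈ σ, p i) * ∏ i ∈ τ, (1 - p i) := by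
  simp [psm]

lemma not_isUnit_X {n : ℕ} (i : Fin n) : ¬ IsUnit (X i : MvPolynomial (Fin n) (ZMod 2)) := by
  intro h
  have := h.map (eval (fun _ => (0 : ZMod 2)))
  simp [isUnit_iff_eq_one] at this

lemma not_isUnit_one_sub_X {n : ℕ} (i : Fin n) :
    ¬ IsUnit ((1 - X i) : MvPolynomial (Fin n) (ZMod 2)) := by
  intro h
  have := h.map (eval (fun _ => (1 : ZMod 2)))
  simp [isUnit_iff_eq_one] at this

lemma psm_dvd_sub {n : ℕ} {σ₁ τ₁ σ₂ τ₂ : Finset (Fin n)} (h2 : Disjoint σ₂ τ₂)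
    (h : psm n σ₁ τ₁ ∣ psm n σ₂ τ₂) : σ₁ ⊆ σ₂ ∧ τ₁ ⊆ τ₂ := by
  classical
  obtain ⟨q, hq⟩ := h
  set v : Fin n → MvPolynomial (Fin n) (ZMod 2) :=
    fun i => if i ∈ σ₂ then 1 else if i ∈ τ₂ then 0 else X i with hv
  have h2' : ∀ i ∈ τ₂, i ∉ σ₂ := fun i hi hi2 => (Finset.disjoint_left.1 h2) hi2 hi
  have hev : aeval v (psm n σ₂ τ₂) = 1 := by
    have e1 : ∏ i ∈ σ₂, v i = 1 := Finset.prod_eq_one (fun i hi => by simp [hv, hi])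
    have e2 : ∏ i ∈ τ₂, ((1 : MvPolynomial (Fin n) (ZMod 2)) - v i) = 1 :=
      Finset.prod_eq_one (fun i hi => by simp [hv, hi, h2' i hi])
    simp only [psm, map_mul, map_prod, map_sub, map_one, aeval_X]
    rw [e1, e2, one_mul]
  have hu : IsUnit (aeval v (psm n σ₁ τ₁)) := by
    refine IsUnit.of_mul_eq_one (aeval v q) ?_
    rw [← map_mul, ← hq, hev]
  rw [psm, map_mul, map_prod, map_prod] at hu
  have hu1 : IsUnit (∏ i ∈ σ₁, aeval v (X i)) :=
    isUnit_of_dvd_unit (dvd_mul_right _ _) hu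
  have hu2 : IsUnit (∏ i ∈ τ₁, aeval v ((1 : MvPolynomial (Fin n) (ZMod 2)) - X i)) :=
    isUnit_of_dvd_unit (dvd_mul_left _ _) hu
  constructor
  · intro i hi
    have := isUnit_of_dvd_unit (Finset.dvd_prod_of_mem _ hi) hu1
    rw [aeval_X, hv] at this
    by_contra hns
    simp only [hns, if_false] at this
    by_cases ht : i ∈ τ₂
    · rw [if_pos ht] at this
      exact (by simpa using this.map (eval (fun _ => (0:ZMod 2))) : False)
    · rw [if_neg ht] at this
      exact not_isUnit_X i this
  · intro i hi
    have := isUnit_of_dvd_unit (Finset.dvd_prod_of_mem _ hi) hu2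
    rw [map_sub, map_one, aeval_X, hv] at this
    by_contra hnt
    by_cases hs : i ∈ σ₂
    · simp only [hs, ite_true] at this
      simp [sub_self, isUnit_zero_iff] at this
    · simp only [hs, hnt, ite_true, ite_false] at this
      exact not_isUnit_one_sub_X i this

/-- Theorem 7.1 (chain), generic case (0-based indices: paper index `j` ↦ `j-1`):
the canonical form of `(x₁g₁, x₂(1-x₁)g₂, …, x_{k-1}(1-x_{k-2})g_{k-1}, (1-x_{k-1})g_k)`
under the nondegeneracy assumptions on the products `[g_a⋯g_b]`. -/
theorem stmt6 {n k : ℕ} (hn : 0 < n) (hk : 2 < k) (hkn : k - 1 ≤ n)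
    (σ τ : ℕ → Finset (Fin n))
    (hdisj : ∀ j < k, Disjoint (σ j) (τ j))
    (hhigh : ∀ j < k, ∀ i ∈ σ j ∪ τ j, k - 1 ≤ (i : ℕ))
    (hshare : ∀ j₁ < k, ∀ j₂ < k, j₁ ≠ j₂ →
      ∀ i : Fin n, i ∉ (σ j₁ ∩ τ j₂) ∪ (σ j₂ ∩ τ j₁))
    (g : ℕ → MvPolynomial (Fin n) (ZMod 2))
    (hg : ∀ j < k, g j = psm n (σ j) (τ j))
    (xv yv : ℕ → MvPolynomial (Fin n) (ZMod 2))
    (hxv : ∀ j (h : j < n), xv j = X (⟨j, h⟩ : Fin n))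
    (hyv : ∀ j (h : j < n), yv j = 1 - X (⟨j, h⟩ : Fin n))
    (Gp : ℕ → ℕ → MvPolynomial (Fin n) (ZMod 2))
    (hGp : ∀ a b, Gp a b =
      psm n ((Finset.Icc a b).biUnion σ) ((Finset.Icc a b).biUnion τ))
    (hcond1 : ∀ t t' : ℕ, t ≤ t' → t' < k - 1 → Gp t (k - 1) ≠ Gp t t')
    (hcond2 : ∀ s' s : ℕ, 1 ≤ s' → s' ≤ s → s < k → Gp 0 s ≠ Gp s' s)
    (Gens : Set (MvPolynomial (Fin n) (ZMod 2)))
    (hGens : Gens = ({xv 0 * g 0} : Set (MvPolynomial (Fin n) (ZMod 2))) ∪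
      {f | ∃ j : ℕ, 1 ≤ j ∧ j ≤ k - 2 ∧ f = xv j * yv (j - 1) * g j} ∪
      {yv (k - 2) * g (k - 1)}) :
    CF (Ideal.span Gens) =
      ({f | ∃ j : ℕ, j ≤ k - 2 ∧ f = xv j * Gp 0 j} ∪
       ({Gp 0 (k - 1)} : Set (MvPolynomial (Fin n) (ZMod 2))) ∪
       {f | ∃ i j : ℕ, i < j ∧ j ≤ k - 2 ∧ f = xv j * yv i * Gp (i + 1) j} ∪
       {f | ∃ i : ℕ, i ≤ k - 2 ∧ f = yv i * Gp (i + 1) (k - 1)}) ∧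
    Gens ≠ CF (Ideal.span Gens) := by
  classical
  obtain ⟨K, rfl⟩ : ∃ K, k = K + 2 := ⟨k - 2, by omega⟩
  have ee1 : K + 2 - 1 = K + 1 := by omega
  have ee2 : K + 2 - 2 = K := by omega
  simp only [ee1, ee2] at hkn hhigh hcond1 hGens ⊢
  -- generator membership
  have hGen1 : xv 0 * g 0 ∈ Gens := by
    rw [hGens]; exact Or.inl (Or.inl rfl)
  have hGen2 : ∀ j, 1 ≤ j → j ≤ K → xv j * yv (j - 1) * g j ∈ Gens := by
    intro j h1 h2; rw [hGens]; exact Or.inl (Or.inr ⟨j, h1, h2, rfl⟩)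
  have hGen3 : yv K * g (K + 1) ∈ Gens := by
    rw [hGens]; exact Or.inr rfl
  -- index embedding
  have hjn : ∀ j : ℕ, j ≤ K → j < n := fun j hj => by omega
  set e : ℕ → Fin n := fun j => ⟨j % n, Nat.mod_lt j hn⟩ with hedef
  have he : ∀ j, j ≤ K → ((e j : Fin n) : ℕ) = j := fun j hj => Nat.mod_eq_of_lt (hjn j hj)
  have hxe : ∀ j, j ≤ K → xv j = X (e j) := by
    intro j hj
    rw [hxv j (hjn j hj)]
    exact congrArg X (Fin.val_injective (he j hj).symm)
  have hye : ∀ j, j ≤ K → yv j = 1 - X (e j) := by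
    intro j hj
    rw [hyv j (hjn j hj)]
    rw [show (⟨j, hjn j hj⟩ : Fin n) = e j from Fin.val_injective (he j hj).symm]
  -- high/low facts
  have hhighσ : ∀ m, m ≤ K + 1 → ∀ i ∈ σ m, K + 1 ≤ (i : ℕ) := fun m hm i hi =>
    hhigh m (by omega) i (Finset.mem_union_left _ hi)
  have hhighτ : ∀ m, m ≤ K + 1 → ∀ i ∈ τ m, K + 1 ≤ (i : ℕ) := fun m hm i hi =>
    hhigh m (by omega) i (Finset.mem_union_right _ hi)
  have hhighA : ∀ a b, b ≤ K + 1 → ∀ i ∈ (Finset.Icc a b).biUnion σ, K + 1 ≤ (i : ℕ) := by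
    intro a b hb i hi
    obtain ⟨m, hm, him⟩ := Finset.mem_biUnion.1 hi
    exact hhighσ m (le_trans (Finset.mem_Icc.1 hm).2 hb) i him
  have hhighB : ∀ a b, b ≤ K + 1 → ∀ i ∈ (Finset.Icc a b).biUnion τ, K + 1 ≤ (i : ℕ) := by
    intro a b hb i hi
    obtain ⟨m, hm, him⟩ := Finset.mem_biUnion.1 hi
    exact hhighτ m (le_trans (Finset.mem_Icc.1 hm).2 hb) i him
  have heA : ∀ j, j ≤ K → ∀ a b, b ≤ K + 1 → e j ∉ (Finset.Icc a b).biUnion σ := by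
    intro j hj a b hb h
    have := hhighA a b hb _ h
    rw [he j hj] at this; omega
  have heB : ∀ j, j ≤ K → ∀ a b, b ≤ K + 1 → e j ∉ (Finset.Icc a b).biUnion τ := by
    intro j hj a b hb h
    have := hhighB a b hb _ h
    rw [he j hj] at this; omega
  have hστ : ∀ m, m ≤ K + 1 → ∀ m', m' ≤ K + 1 → ∀ i : Fin n, i ∈ σ m → i ∈ τ m' → False := by
    intro m hm m' hm' i h1 h2
    by_cases hmm : m = m'
    · subst hmm
      exact Finset.disjoint_left.1 (hdisj m (by omega)) h1 h2
    · exact hshare m (by omega) m' (by omega) hmm i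
        (Finset.mem_union_left _ (Finset.mem_inter.2 ⟨h1, h2⟩))
  have hdisjAB : ∀ a b a' b', b ≤ K + 1 → b' ≤ K + 1 →
      Disjoint ((Finset.Icc a b).biUnion σ) ((Finset.Icc a' b').biUnion τ) := by
    intro a b a' b' hb hb'
    rw [Finset.disjoint_left]
    intro i h1 h2
    obtain ⟨m, hm, him⟩ := Finset.mem_biUnion.1 h1
    obtain ⟨m', hm', him'⟩ := Finset.mem_biUnion.1 h2
    exact hστ m (le_trans (Finset.mem_Icc.1 hm).2 hb) m' (le_trans (Finset.mem_Icc.1 hm').2 hb') i him him'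
  -- subsets
  have hσA : ∀ m a b, a ≤ m → m ≤ b → σ m ⊆ (Finset.Icc a b).biUnion σ := fun m a b h1 h2 =>
    Finset.subset_biUnion_of_mem σ (Finset.mem_Icc.2 ⟨h1, h2⟩)
  have hτB : ∀ m a b, a ≤ m → m ≤ b → τ m ⊆ (Finset.Icc a b).biUnion τ := fun m a b h1 h2 =>
    Finset.subset_biUnion_of_mem τ (Finset.mem_Icc.2 ⟨h1, h2⟩)
  have hAmono : ∀ a a' b b', a' ≤ a → b ≤ b' →
      (Finset.Icc a b).biUnion σ ⊆ (Finset.Icc a' b').biUnion σ := fun a a' b b' h1 h2 =>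
    Finset.biUnion_subset_biUnion_of_subset_left σ (Finset.Icc_subset_Icc h1 h2)
  have hBmono : ∀ a a' b b', a' ≤ a → b ≤ b' →
      (Finset.Icc a b).biUnion τ ⊆ (Finset.Icc a' b').biUnion τ := fun a a' b b' h1 h2 =>
    Finset.biUnion_subset_biUnion_of_subset_left τ (Finset.Icc_subset_Icc h1 h2)
  -- product identities
  have hGmul : ∀ a b a' b', a ≤ a' → b' ≤ b →
      Gp a' b' * psm n ((Finset.Icc a b).biUnion σ \ (Finset.Icc a' b').biUnion σ)
        ((Finset.Icc a b).biUnion τ \ (Finset.Icc a' b').biUnion τ) = Gp a b := by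
    intro a b a' b' h1 h2
    rw [hGp, hGp]
    exact psm_comp (hAmono a' a b' b h1 h2) (hBmono a' a b' b h1 h2)
  have hgmul : ∀ m a b, a ≤ m → m ≤ b → b ≤ K + 1 →
      g m * psm n ((Finset.Icc a b).biUnion σ \ σ m) ((Finset.Icc a b).biUnion τ \ τ m) = Gp a b := by
    intro m a b h1 h2 hb
    rw [hg m (by omega), hGp]
    exact psm_comp (hσA m a b h1 h2) (hτB m a b h1 h2)
  have hGpg : ∀ m, m ≤ K + 1 → Gp m m = g m := by
    intro m hm
    rw [hGp, hg m (by omega), Finset.Icc_self, Finset.singleton_biUnion, Finset.singleton_biUnion]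
  -- membership lemmas
  have M1 : ∀ j, j ≤ K → xv j * Gp 0 j ∈ Ideal.span Gens := by
    intro j
    induction j with
    | zero =>
      intro _
      rw [hGpg 0 (by omega)]
      exact Ideal.subset_span hGen1
    | succ j ih =>
      intro hj
      have h1 := hgmul (j + 1) 0 (j + 1) (by omega) le_rfl (by omega)
      have h2 := hGmul 0 (j + 1) 0 j le_rfl (by omega)
      have key : xv (j + 1) * Gp 0 (j + 1) =
          psm n ((Finset.Icc 0 (j+1)).biUnion σ \ σ (j+1)) ((Finset.Icc 0 (j+1)).biUnion τ \ τ (j+1))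
            * (xv (j + 1) * yv j * g (j + 1)) +
          (xv (j + 1) * psm n ((Finset.Icc 0 (j+1)).biUnion σ \ (Finset.Icc 0 j).biUnion σ)
            ((Finset.Icc 0 (j+1)).biUnion τ \ (Finset.Icc 0 j).biUnion τ)) * (xv j * Gp 0 j) := by
        rw [hxe (j + 1) hj, hxe j (by omega), hye j (by omega)]
        linear_combination (-(X (e (j+1)) * (1 - X (e j)))) * h1 - (X (e (j+1)) * X (e j)) * h2
      rw [key]
      refine Ideal.add_mem _ (Ideal.mul_mem_left _ _ (Ideal.subset_span (hGen2 (j+1) (by omega) hj)))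
        (Ideal.mul_mem_left _ _ (ih (by omega)))
  
  have M3 : ∀ t i j, i < j → j ≤ K → j - 1 - i ≤ t →
      xv j * yv i * Gp (i + 1) j ∈ Ideal.span Gens := by
    intro t
    induction t with
    | zero =>
      intro i j hij hj hd
      obtain rfl : j = i + 1 := by omega
      rw [hGpg (i + 1) (by omega)]
      have : yv i = yv (i + 1 - 1) := by norm_num
      rw [this]
      exact Ideal.subset_span (hGen2 (i + 1) (by omega) hj)
    | succ t ih =>
      intro i j hij hj hd
      by_cases hc : j = i + 1
      · subst hc
        rw [hGpg (i + 1) (by omega)]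
        have : yv i = yv (i + 1 - 1) := by norm_num
        rw [this]
        exact Ideal.subset_span (hGen2 (i + 1) (by omega) hj)
      · have hij2 : i + 1 < j := by omega
        have h1 := hgmul (i + 1) (i + 1) j le_rfl (by omega) (by omega)
        have h2 := hGmul (i + 1) j (i + 2) j (by omega) le_rfl
        have key : xv j * yv i * Gp (i + 1) j =
            (xv j * psm n ((Finset.Icc (i+1) j).biUnion σ \ σ (i+1))
              ((Finset.Icc (i+1) j).biUnion τ \ τ (i+1))) * (xv (i + 1) * yv i * g (i + 1)) +
            (yv i * psm n ((Finset.Icc (i+1) j).biUnion σ \ (Finset.Icc (i+2) j).biUnion σ)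
              ((Finset.Icc (i+1) j).biUnion τ \ (Finset.Icc (i+2) j).biUnion τ)) *
              (xv j * yv (i + 1) * Gp (i + 2) j) := by
          rw [hxe j hj, hxe (i + 1) (by omega), hye i (by omega), hye (i + 1) (by omega)]
          linear_combination (-(X (e j) * (1 - X (e i)) * X (e (i+1)))) * h1 -
            (X (e j) * (1 - X (e i)) * (1 - X (e (i+1)))) * h2
        rw [key]
        have hg2 : xv (i + 1) * yv i * g (i + 1) ∈ Gens := by
          have : yv i = yv (i + 1 - 1) := by norm_num
          rw [this]
          exact hGen2 (i + 1) (by omega) (by omega)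
        exact Ideal.add_mem _ (Ideal.mul_mem_left _ _ (Ideal.subset_span hg2))
          (Ideal.mul_mem_left _ _ (ih (i + 1) j hij2 hj (by omega)))
  have M4 : ∀ t i, i ≤ K → K - i ≤ t → yv i * Gp (i + 1) (K + 1) ∈ Ideal.span Gens := by
    intro t
    induction t with
    | zero =>
      intro i hi hd
      have hiK : i = K := by omega
      rw [hiK, hGpg (K + 1) le_rfl]
      exact Ideal.subset_span hGen3
    | succ t ih =>
      intro i hi hd
      by_cases hc : i = K
      · rw [hc, hGpg (K + 1) le_rfl]
        exact Ideal.subset_span hGen3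
      · have hiK : i < K := by omega
        have h1 := hgmul (i + 1) (i + 1) (K + 1) le_rfl (by omega) le_rfl
        have h2 := hGmul (i + 1) (K + 1) (i + 2) (K + 1) (by omega) le_rfl
        have key : yv i * Gp (i + 1) (K + 1) =
            (psm n ((Finset.Icc (i+1) (K+1)).biUnion σ \ σ (i+1))
              ((Finset.Icc (i+1) (K+1)).biUnion τ \ τ (i+1))) * (xv (i + 1) * yv i * g (i + 1)) +
            (yv i * psm n ((Finset.Icc (i+1) (K+1)).biUnion σ \ (Finset.Icc (i+2) (K+1)).biUnion σ)
              ((Finset.Icc (i+1) (K+1)).biUnion τ \ (Finset.Icc (i+2) (K+1)).biUnion τ)) *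
              (yv (i + 1) * Gp (i + 2) (K + 1)) := by
          rw [hxe (i + 1) (by omega), hye i (by omega), hye (i + 1) (by omega)]
          linear_combination (-((1 - X (e i)) * X (e (i+1)))) * h1 -
            ((1 - X (e i)) * (1 - X (e (i+1)))) * h2
        rw [key]
        have hg2 : xv (i + 1) * yv i * g (i + 1) ∈ Gens := by
          have : yv i = yv (i + 1 - 1) := by norm_num
          rw [this]
          exact hGen2 (i + 1) (by omega) (by omega)
        exact Ideal.add_mem _ (Ideal.mul_mem_left _ _ (Ideal.subset_span hg2))
          (Ideal.mul_mem_left _ _ (ih (i + 1) (by omega) (by omega)))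
  have M4' : ∀ i, i ≤ K → yv i * Gp (i + 1) (K + 1) ∈ Ideal.span Gens :=
    fun i hi => M4 K i hi (by omega)
  have M3' : ∀ i j, i < j → j ≤ K → xv j * yv i * Gp (i + 1) j ∈ Ideal.span Gens :=
    fun i j h1 h2 => M3 j i j h1 h2 (by omega)
  have M2 : Gp 0 (K + 1) ∈ Ideal.span Gens := by
    have h1 := hgmul 0 0 (K + 1) le_rfl (by omega) le_rfl
    have h2 := hGmul 0 (K + 1) 1 (K + 1) (by omega) le_rfl
    have key : Gp 0 (K + 1) =
        (psm n ((Finset.Icc 0 (K+1)).biUnion σ \ σ 0) ((Finset.Icc 0 (K+1)).biUnion τ \ τ 0))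
          * (xv 0 * g 0) +
        (psm n ((Finset.Icc 0 (K+1)).biUnion σ \ (Finset.Icc 1 (K+1)).biUnion σ)
          ((Finset.Icc 0 (K+1)).biUnion τ \ (Finset.Icc 1 (K+1)).biUnion τ)) *
          (yv 0 * Gp 1 (K + 1)) := by
      rw [hxe 0 (by omega), hye 0 (by omega)]
      linear_combination (-(X (e 0))) * h1 - (1 - X (e 0)) * h2
    rw [key]
    exact Ideal.add_mem _ (Ideal.mul_mem_left _ _ (Ideal.subset_span hGen1))
      (Ideal.mul_mem_left _ _ (M4' 0 (by omega)))
  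
  -- key lemma: every pseudomonomial in the ideal is divisible by a CF element
  have key : ∀ Sf Tf : Finset (Fin n), Disjoint Sf Tf → psm n Sf Tf ∈ Ideal.span Gens →
      (∃ j, j ≤ K ∧ e j ∈ Sf ∧ (Finset.Icc 0 j).biUnion σ ⊆ Sf ∧ (Finset.Icc 0 j).biUnion τ ⊆ Tf) ∨
      ((Finset.Icc 0 (K+1)).biUnion σ ⊆ Sf ∧ (Finset.Icc 0 (K+1)).biUnion τ ⊆ Tf) ∨
      (∃ i j, i < j ∧ j ≤ K ∧ e j ∈ Sf ∧ e i ∈ Tf ∧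
        (Finset.Icc (i+1) j).biUnion σ ⊆ Sf ∧ (Finset.Icc (i+1) j).biUnion τ ⊆ Tf) ∨
      (∃ i, i ≤ K ∧ e i ∈ Tf ∧
        (Finset.Icc (i+1) (K+1)).biUnion σ ⊆ Sf ∧ (Finset.Icc (i+1) (K+1)).biUnion τ ⊆ Tf) := by
    intro Sf Tf hST hmem
    by_contra hcon
    set P : ℕ → Prop := fun m => ¬ (σ m ⊆ Sf ∧ τ m ⊆ Tf) with hP
    have hIcc : ∀ a b : ℕ, ¬((Finset.Icc a b).biUnion σ ⊆ Sf ∧ (Finset.Icc a b).biUnion τ ⊆ Tf) →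
        ∃ m, a ≤ m ∧ m ≤ b ∧ P m := by
      intro a b h
      by_contra h2
      have h3 : ∀ m, a ≤ m → m ≤ b → σ m ⊆ Sf ∧ τ m ⊆ Tf := by
        intro m hm1 hm2
        by_contra h4
        exact h2 ⟨m, hm1, hm2, h4⟩
      refine h ⟨Finset.biUnion_subset.2 (fun m hm => ?_), Finset.biUnion_subset.2 (fun m hm => ?_)⟩
      · exact (h3 m (Finset.mem_Icc.1 hm).1 (Finset.mem_Icc.1 hm).2).1
      · exact (h3 m (Finset.mem_Icc.1 hm).1 (Finset.mem_Icc.1 hm).2).2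
    have hA' : ∀ j, j ≤ K → e j ∈ Sf → ∃ m, m ≤ j ∧ P m := by
      intro j hj hS
      obtain ⟨m, _, hm2, hm3⟩ :=
        hIcc 0 j (fun hsub => hcon (Or.inl ⟨j, hj, hS, hsub.1, hsub.2⟩))
      exact ⟨m, hm2, hm3⟩
    have hB' : ∃ m, m ≤ K + 1 ∧ P m := by
      obtain ⟨m, _, hm2, hm3⟩ := hIcc 0 (K+1) (fun hsub => hcon (Or.inr (Or.inl hsub)))
      exact ⟨m, hm2, hm3⟩
    have hC' : ∀ i j, i < j → j ≤ K → e j ∈ Sf → e i ∈ Tf → ∃ m, i + 1 ≤ m ∧ m ≤ j ∧ P m :=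
      fun i j h1 h2 h3 h4 => hIcc (i+1) j
        (fun hsub => hcon (Or.inr (Or.inr (Or.inl ⟨i, j, h1, h2, h3, h4, hsub.1, hsub.2⟩))))
    have hD' : ∀ i, i ≤ K → e i ∈ Tf → ∃ m, i + 1 ≤ m ∧ m ≤ K + 1 ∧ P m :=
      fun i h1 h2 => hIcc (i+1) (K+1)
        (fun hsub => hcon (Or.inr (Or.inr (Or.inr ⟨i, h1, h2, hsub.1, hsub.2⟩))))
    set m0 : ℕ := Nat.findGreatest P (K + 1) with hm0def
    obtain ⟨mB, hmB1, hmB2⟩ := hB'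
    have hm0P : P m0 := Nat.findGreatest_spec hmB1 hmB2
    have hm0le : m0 ≤ K + 1 := Nat.findGreatest_le _
    have hm0max : ∀ m, m0 < m → m ≤ K + 1 → ¬ P m :=
      fun m h1 h2 => Nat.findGreatest_is_greatest h1 h2
    set s : ℕ → ℕ := fun j => Nat.findGreatest P j with hsdef
    have hsle : ∀ j, s j ≤ j := fun j => Nat.findGreatest_le _
    have hsP : ∀ j, j ≤ K → e j ∈ Sf → P (s j) := by
      intro j hj hS
      obtain ⟨m, hm1, hm2⟩ := hA' j hj hS
      exact Nat.findGreatest_spec hm1 hm2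
    have hsmax : ∀ j m, s j < m → m ≤ j → ¬ P m :=
      fun j m h1 h2 => Nat.findGreatest_is_greatest h1 h2
    set Q : ℕ → Prop := fun j' => (m0 ≤ K ∧ m0 ≤ j' ∧ j' ≤ K) ∨
      (∃ j, j ≤ K ∧ e j ∈ Sf ∧ s j ≤ j' ∧ j' ≤ j) with hQdef
    have hQS : ∀ j, j ≤ K → e j ∈ Sf → Q j := fun j hj hS => Or.inr ⟨j, hj, hS, hsle j, le_rfl⟩
    have hQT : ∀ j', j' ≤ K → e j' ∈ Tf → ¬ Q j' := by
      intro j' hj' hT hQ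
      rcases hQ with ⟨h0, h1, h2⟩ | ⟨j, hj, hS, h1, h2⟩
      · obtain ⟨m, hm1, hm2, hm3⟩ := hD' j' hj' hT
        exact hm0max m (by omega) hm2 hm3
      · rcases eq_or_lt_of_le h2 with heq | hlt
        · exact Finset.disjoint_left.1 hST (heq ▸ hS) hT
        · obtain ⟨m, hm1, hm2, hm3⟩ := hC' j' j hlt hj hS hT
          exact hsmax j m (by omega) hm2 hm3
    have hQstart : ∀ j', Q j' → (j' = 0 ∨ ¬ Q (j' - 1)) → P j' := by
      intro j' hQ hprev
      rcases hQ with ⟨h0, h1, h2⟩ | ⟨j, hj, hS, h1, h2⟩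
      · rcases eq_or_lt_of_le h1 with heq | hlt
        · exact heq ▸ hm0P
        · have hq : Q (j' - 1) := Or.inl ⟨h0, by omega, by omega⟩
          rcases hprev with h | h
          · omega
          · exact absurd hq h
      · rcases eq_or_lt_of_le h1 with heq | hlt
        · exact heq ▸ hsP j hj hS
        · have hq : Q (j' - 1) := Or.inr ⟨j, hj, hS, by omega, by omega⟩
          rcases hprev with h | h
          · omega
          · exact absurd hq h
    have hck : Q K ∨ P (K + 1) := by
      rcases eq_or_lt_of_le hm0le with heq | hlt
      · exact Or.inr (heq ▸ hm0P)
      · exact Or.inl (Or.inl ⟨by omega, by omega, le_rfl⟩)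
    -- the point
    set p : Fin n → ZMod 2 := fun i =>
      if (i : ℕ) ≤ K then (if Q (i : ℕ) then 1 else 0)
      else if i ∈ Tf then 0 else if i ∈ Sf then 1
      else if ∃ m, m ≤ K + 1 ∧ i ∈ τ m then 1 else 0 with hpdef
    have hpe : ∀ j, j ≤ K → p (e j) = (if Q j then 1 else 0) := by
      intro j hj
      simp only [hpdef, he j hj, Nat.mod_eq_of_lt (hjn j hj)]
      rw [if_pos hj]
    have hpS : ∀ i ∈ Sf, p i = 1 := by
      intro i hi
      by_cases hlow : (i : ℕ) ≤ K
      · have hei : e (i : ℕ) = i := Fin.val_injective (he _ hlow)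
        have hQ : Q (i : ℕ) := hQS _ hlow (by rw [hei]; exact hi)
        simp only [hpdef]
        rw [if_pos hlow, if_pos hQ]
      · have hnT : i ∉ Tf := Finset.disjoint_left.1 hST hi
        simp only [hpdef]
        rw [if_neg hlow, if_neg hnT, if_pos hi]
    have hpT : ∀ i ∈ Tf, p i = 0 := by
      intro i hi
      by_cases hlow : (i : ℕ) ≤ K
      · have hei : e (i : ℕ) = i := Fin.val_injective (he _ hlow)
        have hQ : ¬ Q (i : ℕ) := hQT _ hlow (by rw [hei]; exact hi)
        simp only [hpdef]
        rw [if_pos hlow, if_neg hQ]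
      · simp only [hpdef]
        rw [if_neg hlow, if_pos hi]
    have hgz : ∀ m, m ≤ K + 1 → P m → eval p (psm n (σ m) (τ m)) = 0 := by
      intro m hm hPm
      rw [eval_psm]
      by_cases hσs : σ m ⊆ Sf
      · have hτs : ¬ τ m ⊆ Tf := fun h => hPm ⟨hσs, h⟩
        obtain ⟨i, hiτ, hiT⟩ := Finset.not_subset.1 hτs
        have hhi : K + 1 ≤ (i : ℕ) := hhighτ m hm i hiτ
        have hpi : p i = 1 := by
          simp only [hpdef]
          rw [if_neg (by omega), if_neg hiT]
          by_cases hiS : i ∈ Sf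
          · rw [if_pos hiS]
          · rw [if_neg hiS, if_pos ⟨m, hm, hiτ⟩]
        apply mul_eq_zero_of_right
        exact Finset.prod_eq_zero hiτ (by rw [hpi, sub_self])
      · obtain ⟨i, hiσ, hiS⟩ := Finset.not_subset.1 hσs
        have hhi : K + 1 ≤ (i : ℕ) := hhighσ m hm i hiσ
        have hpi : p i = 0 := by
          simp only [hpdef]
          rw [if_neg (by omega)]
          by_cases hiT : i ∈ Tf
          · rw [if_pos hiT]
          · rw [if_neg hiT, if_neg hiS,
              if_neg (show ¬∃ m', m' ≤ K + 1 ∧ i ∈ τ m' from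
                fun ⟨m', hm', him'⟩ => hστ m hm m' hm' i hiσ him')]
        apply mul_eq_zero_of_left
        exact Finset.prod_eq_zero hiσ hpi
    have hker : ∀ f ∈ Gens, eval p f = 0 := by
      intro f hf
      rw [hGens] at hf
      rcases hf with (hf | hf) | hf
      · rw [Set.eq_of_mem_singleton hf]
        rw [map_mul, hxe 0 (by omega), hg 0 (by omega), eval_X]
        by_cases hQ0 : Q 0
        · rw [hgz 0 (by omega) (hQstart 0 hQ0 (Or.inl rfl)), mul_zero]
        · rw [hpe 0 (by omega), if_neg hQ0, zero_mul]
      · obtain ⟨j, h1, h2, rfl⟩ := hf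
        rw [hg j (by omega), hxe j h2, hye (j - 1) (by omega), map_mul, map_mul, eval_X,
          map_sub, map_one, eval_X]
        by_cases hQj : Q j
        · by_cases hQp : Q (j - 1)
          · rw [hpe (j - 1) (by omega), if_pos hQp]
            simp
          · rw [hgz j (by omega) (hQstart j hQj (Or.inr hQp)), mul_zero]
        · rw [hpe j h2, if_neg hQj]
          simp
      · rw [Set.eq_of_mem_singleton hf]
        rw [map_mul, hye K le_rfl, hg (K + 1) (by omega), map_sub, map_one, eval_X]
        rcases hck with hQK | hPK
        · rw [hpe K le_rfl, if_pos hQK]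
          simp
        · rw [hgz (K + 1) le_rfl hPK, mul_zero]
    have hle : Ideal.span Gens ≤ RingHom.ker (eval p) :=
      Ideal.span_le.2 (fun f hf => RingHom.mem_ker.2 (hker f hf))
    have hz : eval p (psm n Sf Tf) = 0 := RingHom.mem_ker.1 (hle hmem)
    rw [eval_psm, Finset.prod_eq_one (fun i hi => hpS i hi),
      Finset.prod_eq_one (fun i hi => by rw [hpT i hi, sub_zero]), one_mul] at hz
    exact one_ne_zero hz
  
  -- psm forms of the CF elements
  have L1eq : ∀ j, j ≤ K → xv j * Gp 0 j =
      psm n ({e j} ∪ (Finset.Icc 0 j).biUnion σ) ((Finset.Icc 0 j).biUnion τ) := by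
    intro j hj
    rw [hxe j hj, hGp]
    have hx : (X (e j) : MvPolynomial (Fin n) (ZMod 2)) = psm n {e j} ∅ := by simp [psm]
    rw [hx, psm_mul (Finset.disjoint_singleton_left.2 (heA j hj 0 j (by omega)))
      (Finset.disjoint_empty_left _), Finset.empty_union]
  have L3eq : ∀ i j, i < j → j ≤ K → xv j * yv i * Gp (i + 1) j =
      psm n ({e j} ∪ (Finset.Icc (i+1) j).biUnion σ) ({e i} ∪ (Finset.Icc (i+1) j).biUnion τ) := by
    intro i j hij hj
    rw [hxe j hj, hye i (by omega), hGp]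
    have hx : (X (e j)) * ((1 : MvPolynomial (Fin n) (ZMod 2)) - X (e i)) = psm n {e j} {e i} := by
      simp [psm]
    rw [hx, psm_mul (Finset.disjoint_singleton_left.2 (heA j hj (i+1) j (by omega)))
      (Finset.disjoint_singleton_left.2 (heB i (by omega) (i+1) j (by omega)))]
  have L4eq : ∀ i, i ≤ K → yv i * Gp (i + 1) (K + 1) =
      psm n ((Finset.Icc (i+1) (K+1)).biUnion σ) ({e i} ∪ (Finset.Icc (i+1) (K+1)).biUnion τ) := by
    intro i hi
    rw [hye i hi, hGp]
    have hy : ((1 : MvPolynomial (Fin n) (ZMod 2)) - X (e i)) = psm n ∅ {e i} := by simp [psm]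
    rw [hy, psm_mul (Finset.disjoint_empty_left _)
      (Finset.disjoint_singleton_left.2 (heB i hi (i+1) (K+1) le_rfl)), Finset.empty_union]
  have hene : ∀ i j, i ≤ K → j ≤ K → i ≠ j → e i ≠ e j := by
    intro i j hi hj hne h
    apply hne
    have h2 := congrArg Fin.val h
    rw [he i hi, he j hj] at h2
    exact h2
  have D1 : ∀ j, j ≤ K → Disjoint ({e j} ∪ (Finset.Icc 0 j).biUnion σ)
      ((Finset.Icc 0 j).biUnion τ) := fun j hj =>
    Finset.disjoint_union_left.2 ⟨Finset.disjoint_singleton_left.2 (heB j hj 0 j (by omega)),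
      hdisjAB 0 j 0 j (by omega) (by omega)⟩
  have D2 : Disjoint ((Finset.Icc 0 (K+1)).biUnion σ) ((Finset.Icc 0 (K+1)).biUnion τ) :=
    hdisjAB 0 (K+1) 0 (K+1) le_rfl le_rfl
  have D3 : ∀ i j, i < j → j ≤ K → Disjoint ({e j} ∪ (Finset.Icc (i+1) j).biUnion σ)
      ({e i} ∪ (Finset.Icc (i+1) j).biUnion τ) := by
    intro i j hij hj
    rw [Finset.disjoint_union_left, Finset.disjoint_union_right, Finset.disjoint_union_right]
    refine ⟨⟨?_, ?_⟩, ?_, ?_⟩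
    · rw [Finset.disjoint_singleton]
      exact hene j i hj (by omega) (by omega)
    · exact Finset.disjoint_singleton_left.2 (heB j hj (i+1) j (by omega))
    · exact Finset.disjoint_singleton_right.2 (heA i (by omega) (i+1) j (by omega))
    · exact hdisjAB (i+1) j (i+1) j (by omega) (by omega)
  have D4 : ∀ i, i ≤ K → Disjoint ((Finset.Icc (i+1) (K+1)).biUnion σ)
      ({e i} ∪ (Finset.Icc (i+1) (K+1)).biUnion τ) := fun i hi =>
    Finset.disjoint_union_right.2 ⟨Finset.disjoint_singleton_right.2 (heA i hi (i+1) (K+1) le_rfl),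
      hdisjAB (i+1) (K+1) (i+1) (K+1) le_rfl le_rfl⟩
  have hsub_high : ∀ (s t : Finset (Fin n)) (j : ℕ), j ≤ K → (∀ x ∈ s, K + 1 ≤ (x : ℕ)) →
      s ⊆ {e j} ∪ t → s ⊆ t := by
    intro s t j hj hs hsub x hx
    rcases Finset.mem_union.1 (hsub hx) with h | h
    · exfalso
      have h2 := hs x hx
      rw [Finset.mem_singleton.1 h, he j hj] at h2
      omega
    · exact h
  have heme : ∀ j j', j ≤ K → j' ≤ K → ∀ (t : Finset (Fin n)), (∀ x ∈ t, K + 1 ≤ (x : ℕ)) →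
      e j ∈ {e j'} ∪ t → j = j' := by
    intro j j' hj hj' t ht h
    rcases Finset.mem_union.1 h with h | h
    · have h2 := congrArg Fin.val (Finset.mem_singleton.1 h)
      rw [he j hj, he j' hj'] at h2
      exact h2
    · exfalso
      have h2 := ht _ h
      rw [he j hj] at h2
      omega
  have hGpeq : ∀ a b a' b', (Finset.Icc a b).biUnion σ = (Finset.Icc a' b').biUnion σ →
      (Finset.Icc a b).biUnion τ = (Finset.Icc a' b').biUnion τ → Gp a b = Gp a' b' := by
    intro a b a' b' h1 h2
    rw [hGp, hGp, h1, h2]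
  -- the canonical form equality
  have CFeq : CF (Ideal.span Gens) =
      ({f | ∃ j : ℕ, j ≤ K ∧ f = xv j * Gp 0 j} ∪
       ({Gp 0 (K + 1)} : Set (MvPolynomial (Fin n) (ZMod 2))) ∪
       {f | ∃ i j : ℕ, i < j ∧ j ≤ K ∧ f = xv j * yv i * Gp (i + 1) j} ∪
       {f | ∃ i : ℕ, i ≤ K ∧ f = yv i * Gp (i + 1) (K + 1)}) := by
    ext f
    constructor
    · rintro ⟨⟨Sf, Tf, hd, rfl⟩, hfJ, hmin⟩
      rcases key Sf Tf hd hfJ with ⟨j, hj, hS, hAS, hBT⟩ | ⟨hAS, hBT⟩ |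
        ⟨i, j, hij, hj, hS, hT, hAS, hBT⟩ | ⟨i, hi, hT, hAS, hBT⟩
      · have hdvd : xv j * Gp 0 j ∣ psm n Sf Tf := by
          rw [L1eq j hj]
          exact psm_dvd (Finset.union_subset (Finset.singleton_subset_iff.2 hS) hAS) hBT
        rcases eq_or_ne (xv j * Gp 0 j) (psm n Sf Tf) with h | h
        · exact Or.inl (Or.inl (Or.inl ⟨j, hj, h.symm⟩))
        · exact absurd (M1 j hj) (hmin _ ⟨_, _, D1 j hj, L1eq j hj⟩ hdvd h)
      · have hdvd : Gp 0 (K + 1) ∣ psm n Sf Tf := by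
          rw [hGp]
          exact psm_dvd hAS hBT
        rcases eq_or_ne (Gp 0 (K + 1)) (psm n Sf Tf) with h | h
        · exact Or.inl (Or.inl (Or.inr h.symm))
        · exact absurd M2 (hmin _ ⟨_, _, D2, hGp 0 (K + 1)⟩ hdvd h)
      · have hdvd : xv j * yv i * Gp (i + 1) j ∣ psm n Sf Tf := by
          rw [L3eq i j hij hj]
          exact psm_dvd (Finset.union_subset (Finset.singleton_subset_iff.2 hS) hAS)
            (Finset.union_subset (Finset.singleton_subset_iff.2 hT) hBT)
        rcases eq_or_ne (xv j * yv i * Gp (i + 1) j) (psm n Sf Tf) with h | h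
        · exact Or.inl (Or.inr ⟨i, j, hij, hj, h.symm⟩)
        · exact absurd (M3' i j hij hj) (hmin _ ⟨_, _, D3 i j hij hj, L3eq i j hij hj⟩ hdvd h)
      · have hdvd : yv i * Gp (i + 1) (K + 1) ∣ psm n Sf Tf := by
          rw [L4eq i hi]
          exact psm_dvd hAS (Finset.union_subset (Finset.singleton_subset_iff.2 hT) hBT)
        rcases eq_or_ne (yv i * Gp (i + 1) (K + 1)) (psm n Sf Tf) with h | h
        · exact Or.inr ⟨i, hi, h.symm⟩
        · exact absurd (M4' i hi) (hmin _ ⟨_, _, D4 i hi, L4eq i hi⟩ hdvd h)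
    · intro hf
      rcases hf with ((⟨j, hj, rfl⟩ | hf1) | ⟨i, j, hij, hj, rfl⟩) | ⟨i, hi, rfl⟩
      · refine ⟨⟨_, _, D1 j hj, L1eq j hj⟩, M1 j hj, ?_⟩
        intro gg hgP hgdvd hgne hgJ
        obtain ⟨σg, τg, hdg, rfl⟩ := hgP
        rw [L1eq j hj] at hgdvd
        obtain ⟨hσsub, hτsub⟩ := psm_dvd_sub (D1 j hj) hgdvd
        rcases key σg τg hdg hgJ with ⟨j₁, hj₁, hS₁, hAS₁, hBT₁⟩ | ⟨hAS₁, hBT₁⟩ |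
          ⟨i₁, j₁, hij₁, hj₁, hS₁, hT₁, hAS₁, hBT₁⟩ | ⟨i₁, hi₁, hT₁, hAS₁, hBT₁⟩
        · have hj₁j : j₁ = j := heme j₁ j hj₁ hj _ (hhighA 0 j (by omega)) (hσsub hS₁)
          subst hj₁j
          have hσeq : σg = {e j₁} ∪ (Finset.Icc 0 j₁).biUnion σ :=
            Finset.Subset.antisymm hσsub
              (Finset.union_subset (Finset.singleton_subset_iff.2 hS₁) hAS₁)
          have hτeq : τg = (Finset.Icc 0 j₁).biUnion τ := Finset.Subset.antisymm hτsub hBT₁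
          exact hgne (by rw [hσeq, hτeq, ← L1eq j₁ hj₁])
        · have hAeq : (Finset.Icc 0 (K+1)).biUnion σ = (Finset.Icc 0 j).biUnion σ :=
            Finset.Subset.antisymm
              (hsub_high _ _ j hj (hhighA 0 (K+1) le_rfl) (hAS₁.trans hσsub))
              (hAmono 0 0 j (K+1) le_rfl (by omega))
          have hBeq : (Finset.Icc 0 (K+1)).biUnion τ = (Finset.Icc 0 j).biUnion τ :=
            Finset.Subset.antisymm (hBT₁.trans hτsub) (hBmono 0 0 j (K+1) le_rfl (by omega))
          exact absurd (hGpeq 0 (K+1) 0 j hAeq hBeq) (hcond1 0 j (by omega) (by omega))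
        · exact absurd (hτsub hT₁) (heB i₁ (by omega) 0 j (by omega))
        · exact absurd (hτsub hT₁) (heB i₁ hi₁ 0 j (by omega))
      · rw [Set.mem_singleton_iff.1 hf1]
        refine ⟨⟨_, _, D2, hGp 0 (K + 1)⟩, M2, ?_⟩
        intro gg hgP hgdvd hgne hgJ
        obtain ⟨σg, τg, hdg, rfl⟩ := hgP
        rw [hGp 0 (K + 1)] at hgdvd
        obtain ⟨hσsub, hτsub⟩ := psm_dvd_sub D2 hgdvd
        rcases key σg τg hdg hgJ with ⟨j₁, hj₁, hS₁, hAS₁, hBT₁⟩ | ⟨hAS₁, hBT₁⟩ |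
          ⟨i₁, j₁, hij₁, hj₁, hS₁, hT₁, hAS₁, hBT₁⟩ | ⟨i₁, hi₁, hT₁, hAS₁, hBT₁⟩
        · exact absurd (hσsub hS₁) (heA j₁ hj₁ 0 (K+1) le_rfl)
        · have hσeq : σg = (Finset.Icc 0 (K+1)).biUnion σ :=
            Finset.Subset.antisymm hσsub hAS₁
          have hτeq : τg = (Finset.Icc 0 (K+1)).biUnion τ :=
            Finset.Subset.antisymm hτsub hBT₁
          exact hgne (by rw [hσeq, hτeq, ← hGp 0 (K + 1)])
        · exact absurd (hτsub hT₁) (heB i₁ (by omega) 0 (K+1) le_rfl)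
        · exact absurd (hτsub hT₁) (heB i₁ hi₁ 0 (K+1) le_rfl)
      · refine ⟨⟨_, _, D3 i j hij hj, L3eq i j hij hj⟩, M3' i j hij hj, ?_⟩
        intro gg hgP hgdvd hgne hgJ
        obtain ⟨σg, τg, hdg, rfl⟩ := hgP
        rw [L3eq i j hij hj] at hgdvd
        obtain ⟨hσsub, hτsub⟩ := psm_dvd_sub (D3 i j hij hj) hgdvd
        rcases key σg τg hdg hgJ with ⟨j₁, hj₁, hS₁, hAS₁, hBT₁⟩ | ⟨hAS₁, hBT₁⟩ |
          ⟨i₁, j₁, hij₁, hj₁, hS₁, hT₁, hAS₁, hBT₁⟩ | ⟨i₁, hi₁, hT₁, hAS₁, hBT₁⟩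
        · have hj₁j : j₁ = j :=
            heme j₁ j hj₁ hj _ (hhighA (i+1) j (by omega)) (hσsub hS₁)
          subst hj₁j
          have hAeq : (Finset.Icc 0 j₁).biUnion σ = (Finset.Icc (i+1) j₁).biUnion σ :=
            Finset.Subset.antisymm
              (hsub_high _ _ j₁ hj₁ (hhighA 0 j₁ (by omega)) ((hAS₁.trans hσsub)))
              (hAmono (i+1) 0 j₁ j₁ (by omega) le_rfl)
          have hBeq : (Finset.Icc 0 j₁).biUnion τ = (Finset.Icc (i+1) j₁).biUnion τ :=
            Finset.Subset.antisymm
              (hsub_high _ _ i (by omega) (hhighB 0 j₁ (by omega)) ((hBT₁.trans hτsub)))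
              (hBmono (i+1) 0 j₁ j₁ (by omega) le_rfl)
          exact absurd (hGpeq 0 j₁ (i+1) j₁ hAeq hBeq)
            (hcond2 (i+1) j₁ (by omega) (by omega) (by omega))
        · have hAKe : (Finset.Icc 0 (K+1)).biUnion σ = (Finset.Icc (i+1) j).biUnion σ :=
            Finset.Subset.antisymm
              (hsub_high _ _ j hj (hhighA 0 (K+1) le_rfl) (hAS₁.trans hσsub))
              (hAmono (i+1) 0 j (K+1) (by omega) (by omega))
          have hBKe : (Finset.Icc 0 (K+1)).biUnion τ = (Finset.Icc (i+1) j).biUnion τ :=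
            Finset.Subset.antisymm
              (hsub_high _ _ i (by omega) (hhighB 0 (K+1) le_rfl) (hBT₁.trans hτsub))
              (hBmono (i+1) 0 j (K+1) (by omega) (by omega))
          have hAeq : (Finset.Icc 0 j).biUnion σ = (Finset.Icc (i+1) j).biUnion σ :=
            Finset.Subset.antisymm
              ((hAmono 0 0 j (K+1) le_rfl (by omega)).trans hAKe.le)
              (hAmono (i+1) 0 j j (by omega) le_rfl)
          have hBeq : (Finset.Icc 0 j).biUnion τ = (Finset.Icc (i+1) j).biUnion τ :=
            Finset.Subset.antisymm
              ((hBmono 0 0 j (K+1) le_rfl (by omega)).trans hBKe.le)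
              (hBmono (i+1) 0 j j (by omega) le_rfl)
          exact absurd (hGpeq 0 j (i+1) j hAeq hBeq)
            (hcond2 (i+1) j (by omega) (by omega) (by omega))
        · have hj₁j : j₁ = j :=
            heme j₁ j hj₁ hj _ (hhighA (i+1) j (by omega)) (hσsub hS₁)
          have hi₁i : i₁ = i :=
            heme i₁ i (by omega) (by omega) _ (hhighB (i+1) j (by omega)) (hτsub hT₁)
          subst hj₁j
          subst hi₁i
          have hσeq : σg = {e j₁} ∪ (Finset.Icc (i₁+1) j₁).biUnion σ :=
            Finset.Subset.antisymm hσsub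
              (Finset.union_subset (Finset.singleton_subset_iff.2 hS₁) hAS₁)
          have hτeq : τg = {e i₁} ∪ (Finset.Icc (i₁+1) j₁).biUnion τ :=
            Finset.Subset.antisymm hτsub
              (Finset.union_subset (Finset.singleton_subset_iff.2 hT₁) hBT₁)
          exact hgne (by rw [hσeq, hτeq, ← L3eq i₁ j₁ hij hj])
        · have hi₁i : i₁ = i :=
            heme i₁ i hi₁ (by omega) _ (hhighB (i+1) j (by omega)) (hτsub hT₁)
          subst hi₁i
          have hAeq : (Finset.Icc (i₁+1) (K+1)).biUnion σ = (Finset.Icc (i₁+1) j).biUnion σ :=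
            Finset.Subset.antisymm
              (hsub_high _ _ j hj (hhighA (i₁+1) (K+1) le_rfl) (hAS₁.trans hσsub))
              (hAmono (i₁+1) (i₁+1) j (K+1) le_rfl (by omega))
          have hBeq : (Finset.Icc (i₁+1) (K+1)).biUnion τ = (Finset.Icc (i₁+1) j).biUnion τ :=
            Finset.Subset.antisymm
              (hsub_high _ _ i₁ hi₁ (hhighB (i₁+1) (K+1) le_rfl) (hBT₁.trans hτsub))
              (hBmono (i₁+1) (i₁+1) j (K+1) le_rfl (by omega))
          exact absurd (hGpeq (i₁+1) (K+1) (i₁+1) j hAeq hBeq)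
            (hcond1 (i₁+1) j (by omega) (by omega))
      · refine ⟨⟨_, _, D4 i hi, L4eq i hi⟩, M4' i hi, ?_⟩
        intro gg hgP hgdvd hgne hgJ
        obtain ⟨σg, τg, hdg, rfl⟩ := hgP
        rw [L4eq i hi] at hgdvd
        obtain ⟨hσsub, hτsub⟩ := psm_dvd_sub (D4 i hi) hgdvd
        rcases key σg τg hdg hgJ with ⟨j₁, hj₁, hS₁, hAS₁, hBT₁⟩ | ⟨hAS₁, hBT₁⟩ |
          ⟨i₁, j₁, hij₁, hj₁, hS₁, hT₁, hAS₁, hBT₁⟩ | ⟨i₁, hi₁, hT₁, hAS₁, hBT₁⟩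
        · exact absurd (hσsub hS₁) (heA j₁ hj₁ (i+1) (K+1) le_rfl)
        · have hAeq : (Finset.Icc 0 (K+1)).biUnion σ = (Finset.Icc (i+1) (K+1)).biUnion σ :=
            Finset.Subset.antisymm (hAS₁.trans hσsub)
              (hAmono (i+1) 0 (K+1) (K+1) (by omega) le_rfl)
          have hBeq : (Finset.Icc 0 (K+1)).biUnion τ = (Finset.Icc (i+1) (K+1)).biUnion τ :=
            Finset.Subset.antisymm
              (hsub_high _ _ i hi (hhighB 0 (K+1) le_rfl) (hBT₁.trans hτsub))
              (hBmono (i+1) 0 (K+1) (K+1) (by omega) le_rfl)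
          exact absurd (hGpeq 0 (K+1) (i+1) (K+1) hAeq hBeq)
            (hcond2 (i+1) (K+1) (by omega) (by omega) (by omega))
        · exact absurd (hσsub hS₁) (heA j₁ hj₁ (i+1) (K+1) le_rfl)
        · have hi₁i : i₁ = i :=
            heme i₁ i hi₁ hi _ (hhighB (i+1) (K+1) le_rfl) (hτsub hT₁)
          subst hi₁i
          have hσeq : σg = (Finset.Icc (i₁+1) (K+1)).biUnion σ :=
            Finset.Subset.antisymm hσsub hAS₁
          have hτeq : τg = {e i₁} ∪ (Finset.Icc (i₁+1) (K+1)).biUnion τ :=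
            Finset.Subset.antisymm hτsub
              (Finset.union_subset (Finset.singleton_subset_iff.2 hT₁) hBT₁)
          exact hgne (by rw [hσeq, hτeq, ← L4eq i₁ hi₁])
  refine ⟨CFeq, ?_⟩
  intro hEq
  have hmem2 : Gp 0 (K + 1) ∈ CF (Ideal.span Gens) := by
    rw [CFeq]
    exact Or.inl (Or.inl (Or.inr rfl))
  rw [← hEq, hGens] at hmem2
  rcases hmem2 with (hm | hm) | hm
  · have heq2 : Gp 0 (K + 1) = xv 0 * Gp 0 0 := by
      rw [Set.mem_singleton_iff.1 hm, hGpg 0 (by omega)]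
    have hdvd : psm n ({e 0} ∪ (Finset.Icc 0 0).biUnion σ) ((Finset.Icc 0 0).biUnion τ) ∣
        psm n ((Finset.Icc 0 (K+1)).biUnion σ) ((Finset.Icc 0 (K+1)).biUnion τ) := by
      rw [← hGp, ← L1eq 0 (by omega), ← heq2]
    obtain ⟨hs, _⟩ := psm_dvd_sub D2 hdvd
    exact heA 0 (by omega) 0 (K+1) le_rfl (hs (Finset.mem_union_left _ (Finset.mem_singleton_self _)))
  · obtain ⟨j, hj1, hj2, heq2⟩ := hm
    have hj1' : j - 1 + 1 = j := by omega
    have heq3 : Gp 0 (K + 1) = xv j * yv (j - 1) * Gp (j - 1 + 1) j := by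
      rw [heq2, hj1', hGpg j (by omega)]
    have hdvd : psm n ({e j} ∪ (Finset.Icc (j-1+1) j).biUnion σ)
        ({e (j-1)} ∪ (Finset.Icc (j-1+1) j).biUnion τ) ∣
        psm n ((Finset.Icc 0 (K+1)).biUnion σ) ((Finset.Icc 0 (K+1)).biUnion τ) := by
      rw [← hGp, ← L3eq (j-1) j (by omega) hj2, ← heq3]
    obtain ⟨hs, _⟩ := psm_dvd_sub D2 hdvd
    exact heA j hj2 0 (K+1) le_rfl (hs (Finset.mem_union_left _ (Finset.mem_singleton_self _)))
  · have heq2 : Gp 0 (K + 1) = yv K * Gp (K + 1) (K + 1) := by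
      rw [Set.mem_singleton_iff.1 hm, hGpg (K + 1) le_rfl]
    have hdvd : psm n ((Finset.Icc (K+1) (K+1)).biUnion σ)
        ({e K} ∪ (Finset.Icc (K+1) (K+1)).biUnion τ) ∣
        psm n ((Finset.Icc 0 (K+1)).biUnion σ) ((Finset.Icc 0 (K+1)).biUnion τ) := by
      rw [← hGp, ← L4eq K le_rfl, ← heq2]
    obtain ⟨_, ht⟩ := psm_dvd_sub D2 hdvd
    exact heB K le_rfl 0 (K+1) le_rfl (ht (Finset.mem_union_left _ (Finset.mem_singleton_self _)))
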